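/- Let n ≥ 1 and m ≥ 1, let A_1, …, A_m with A_k = (a_ij^{(k)}) be positive n×n reciprocal matrices, and let w_1, …, w_m be positive reals with Σ_{k=1}^m w_k = 1. A positive vector x = (x_j) in ℝⁿ minimizes the function x ↦ Σ_{k=1}^m w_k Σ_{1≤i,j≤n} (log a_ij^{(k)} − log(x_i/x_j))² over all positive vectors if and only if there exists u > 0 such that x_i = u · ∏_{k=1}^m (∏_{j=1}^n a_ij^{(k)})^{w_k/n} for all i. -/

import Mathlib

/-!
In the coordinates `t = log x` the objective is a quadratic function of `t`. Since the weights sum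
to one, it differs by a constant from the single-matrix error `∑ᵢⱼ (Mᵢⱼ - (tᵢ - tⱼ))²` of the
weighted mean `M = ∑ₖ wₖ log Aₖ`, which is skew-symmetric by reciprocity. For skew-symmetric `M`
with row means `ρ`, the residual `Mᵢⱼ - (ρᵢ - ρⱼ)` has zero row and column sums, so it is orthogonal
to every `sᵢ - sⱼ`, and Pythagoras gives the error at `t` as the error at `ρ` plus
`∑ᵢⱼ ((tᵢ - ρᵢ) - (tⱼ - ρⱼ))²`. Hence the minimizers are exactly `ρ + c`, i.e. `x = u · exp ρ`,
and `exp ρ` is the vector of weighted geometric means.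
-/

open Finset Real

section

variable {ι α : Type*} [Fintype ι] [Fintype α]

theorem sum_mul_sub_sq_eq_of_sum_eq_one {w : ι → ℝ} (hw : ∑ k, w k = 1) (a : ι → ℝ) (s : ℝ) :
    ∑ k, w k * (a k - s) ^ 2 =
      (∑ k, w k * a k ^ 2 - (∑ k, w k * a k) ^ 2) + (∑ k, w k * a k - s) ^ 2 := by
  have hexpand : ∀ k, w k * (a k - s) ^ 2 = w k * a k ^ 2 - 2 * s * (w k * a k) + s ^ 2 * w k :=
    fun k => by ring
  simp only [hexpand, sum_add_distrib, sum_sub_distrib, ← mul_sum, hw]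
  ring

theorem sum_sum_sub_sq_eq_zero_iff (s : α → ℝ) :
    ∑ i, ∑ j, (s i - s j) ^ 2 = 0 ↔ ∃ c, ∀ i, s i = c := by
  simp only [sum_eq_zero_iff_of_nonneg (fun _ _ => sum_nonneg fun _ _ => sq_nonneg _),
    sum_eq_zero_iff_of_nonneg (fun _ _ => sq_nonneg _), mem_univ, true_implies,
    sq_eq_zero_iff, sub_eq_zero]
  constructor
  · intro h
    rcases isEmpty_or_nonempty α with hα | ⟨⟨i₀⟩⟩
    · exact ⟨0, isEmptyElim⟩
    · exact ⟨s i₀, fun i => h i i₀⟩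
  · rintro ⟨c, hc⟩ i j
    rw [hc i, hc j]

theorem sum_sum_mul_sub_eq_zero {Q : α → α → ℝ} (hQ : ∀ i j, Q j i = -Q i j)
    (hrow : ∀ i, ∑ j, Q i j = 0) (s : α → ℝ) :
    ∑ i, ∑ j, Q i j * (s i - s j) = 0 := by
  have hcol : ∀ j, ∑ i, Q i j = 0 := fun j => by
    simp only [hQ j, sum_neg_distrib, hrow, neg_zero]
  simp only [mul_sub, sum_sub_distrib]
  rw [sum_comm (f := fun i j => Q i j * s j)]
  simp only [← sum_mul, hrow, hcol, zero_mul, sum_const_zero, sub_zero]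

noncomputable def rowMean (M : α → α → ℝ) (i : α) : ℝ :=
  (∑ j, M i j) / Fintype.card α

theorem sum_rowMean_eq_zero {M : α → α → ℝ} (hM : ∀ i j, M j i = -M i j) :
    ∑ i, rowMean M i = 0 := by
  have hskew : ∑ i, ∑ j, M i j = -∑ i, ∑ j, M i j := by
    conv_lhs => rw [sum_comm]
    simp only [← sum_neg_distrib]
    exact sum_congr rfl fun j _ => sum_congr rfl fun i _ => hM j i
  simp only [rowMean, ← sum_div]
  rw [show ∑ i, ∑ j, M i j = 0 by linarith, zero_div]

theorem sum_sub_sub_rowMean_eq_zero {M : α → α → ℝ} (hM : ∀ i j, M j i = -M i j) (i : α) :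
    ∑ j, (M i j - (rowMean M i - rowMean M j)) = 0 := by
  have : Nonempty α := ⟨i⟩
  have hcard : (Fintype.card α : ℝ) ≠ 0 := Nat.cast_ne_zero.mpr Fintype.card_ne_zero
  rw [sum_sub_distrib, sum_sub_distrib, sum_rowMean_eq_zero hM, sum_const, card_univ,
    nsmul_eq_mul, rowMean, mul_div_cancel₀ _ hcard]
  ring

theorem sum_sum_sub_sq_eq_rowMean_add {M : α → α → ℝ} (hM : ∀ i j, M j i = -M i j)
    (t : α → ℝ) :
    ∑ i, ∑ j, (M i j - (t i - t j)) ^ 2 =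
      ∑ i, ∑ j, (M i j - (rowMean M i - rowMean M j)) ^ 2 +
        ∑ i, ∑ j, ((t i - rowMean M i) - (t j - rowMean M j)) ^ 2 := by
  set Q : α → α → ℝ := fun i j => M i j - (rowMean M i - rowMean M j)
  set s : α → ℝ := fun i => t i - rowMean M i
  have hQ : ∀ i j, Q j i = -Q i j := fun i j => by simp only [Q, hM i j]; ring
  have hcross := sum_sum_mul_sub_eq_zero hQ (sum_sub_sub_rowMean_eq_zero hM) s
  have hexpand : ∀ i j, (M i j - (t i - t j)) ^ 2 =
      Q i j ^ 2 - 2 * (Q i j * (s i - s j)) + (s i - s j) ^ 2 := fun i j => by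
    simp only [Q, s]; ring
  simp only [hexpand, sum_add_distrib, sum_sub_distrib, ← mul_sum, hcross, mul_zero, sub_zero]
  rfl

def weightedFitError (w : ι → ℝ) (L : ι → α → α → ℝ) (t : α → ℝ) : ℝ :=
  ∑ k, w k * ∑ i, ∑ j, (L k i j - (t i - t j)) ^ 2

theorem weightedFitError_eq {w : ι → ℝ} (hw : ∑ k, w k = 1) (L : ι → α → α → ℝ) (t : α → ℝ) :
    weightedFitError w L t =
      ∑ i, ∑ j, (∑ k, w k * L k i j ^ 2 - (∑ k, w k * L k i j) ^ 2) +
        ∑ i, ∑ j, (∑ k, w k * L k i j - (t i - t j)) ^ 2 := by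
  have hswap : weightedFitError w L t = ∑ i, ∑ j, ∑ k, w k * (L k i j - (t i - t j)) ^ 2 := by
    simp only [weightedFitError, mul_sum]
    rw [sum_comm]
    exact sum_congr rfl fun i _ => sum_comm
  simp only [hswap, sum_mul_sub_sq_eq_of_sum_eq_one hw, sum_add_distrib]

theorem forall_le_weightedFitError_iff {w : ι → ℝ} (hw : ∑ k, w k = 1) {L : ι → α → α → ℝ}
    (hL : ∀ k i j, L k j i = -L k i j) (t : α → ℝ) :
    (∀ t', weightedFitError w L t ≤ weightedFitError w L t') ↔
      ∃ c, ∀ i, t i = c + rowMean (fun i j => ∑ k, w k * L k i j) i := by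
  have hM : ∀ i j, ∑ k, w k * L k j i = -∑ k, w k * L k i j := fun i j => by
    simp only [hL _ i j, mul_neg, sum_neg_distrib]
  set ρ := rowMean fun i j => ∑ k, w k * L k i j
  set D : (α → ℝ) → ℝ := fun s => ∑ i, ∑ j, (s i - s j) ^ 2
  have hsplit : ∀ t', weightedFitError w L t' = weightedFitError w L ρ + D (t' - ρ) := by
    intro t'
    rw [weightedFitError_eq hw, weightedFitError_eq hw, sum_sum_sub_sq_eq_rowMean_add hM t',
      sum_sum_sub_sq_eq_rowMean_add hM ρ]
    simp only [D, Pi.sub_apply]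
    ring
  have hD_nonneg : ∀ s, 0 ≤ D s := fun s => sum_nonneg fun _ _ => sum_nonneg fun _ _ => sq_nonneg _
  have hD_zero : D (t - ρ) = 0 ↔ ∃ c, ∀ i, t i = c + ρ i := by
    simp only [D, sum_sum_sub_sq_eq_zero_iff, Pi.sub_apply, sub_eq_iff_eq_add]
  rw [← hD_zero]
  constructor
  · intro hmin
    have := hmin ρ
    rw [hsplit t] at this
    linarith [hD_nonneg (t - ρ)]
  · intro h t'
    rw [hsplit t, hsplit t', h]
    linarith [hD_nonneg (t' - ρ)]

end

theorem forall_pos_log_iff {α : Type*} (P : (α → ℝ) → Prop) :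
    (∀ y : α → ℝ, (∀ j, 0 < y j) → P (fun j => log (y j))) ↔ ∀ t, P t := by
  refine ⟨fun h t => ?_, fun h y _ => h _⟩
  simpa only [log_exp] using h (fun j => exp (t j)) fun j => exp_pos _

theorem exists_log_eq_add_iff {α : Type*} {x : α → ℝ} (hx : ∀ j, 0 < x j) (ρ : α → ℝ) :
    (∃ c, ∀ i, log (x i) = c + ρ i) ↔ ∃ u, 0 < u ∧ ∀ i, x i = u * exp (ρ i) := by
  constructor
  · rintro ⟨c, hc⟩
    exact ⟨exp c, exp_pos c, fun i => by rw [← exp_add, ← hc, exp_log (hx i)]⟩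
  · rintro ⟨u, hu, hxu⟩
    exact ⟨log u, fun i => by rw [hxu, log_mul hu.ne' (exp_pos _).ne', log_exp]⟩

theorem prod_prod_rpow_eq_exp {ι α : Type*} [Fintype ι] [Fintype α] {a : ι → α → ℝ}
    (ha : ∀ k j, 0 < a k j) (w : ι → ℝ) (c : ℝ) :
    ∏ k, (∏ j, a k j) ^ (w k / c) = exp ((∑ j, ∑ k, w k * log (a k j)) / c) := by
  simp only [rpow_def_of_pos (prod_pos fun j _ => ha _ j), log_prod fun j _ => (ha _ j).ne',
    ← exp_sum]
  rw [sum_comm, sum_div]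
  refine congrArg exp (sum_congr rfl fun k _ => ?_)
  rw [sum_mul, sum_div]
  exact sum_congr rfl fun j _ => by ring

theorem weighted_geometric_mean_minimizes_logEuclidean_general
    (n m : ℕ)
    (A : Fin m → Matrix (Fin n) (Fin n) ℝ)
    (hpos : ∀ k i j, 0 < A k i j)
    (hrec : ∀ k i j, A k i j * A k j i = 1)
    (w : Fin m → ℝ) (hsum : ∑ k, w k = 1)
    (x : Fin n → ℝ) (hx : ∀ j, 0 < x j) :
    (∀ y : Fin n → ℝ, (∀ j, 0 < y j) →
        (∑ k, w k * ∑ i, ∑ j, (Real.log (A k i j) - Real.log (x i / x j)) ^ 2) ≤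
          ∑ k, w k * ∑ i, ∑ j, (Real.log (A k i j) - Real.log (y i / y j)) ^ 2) ↔
      ∃ u : ℝ, 0 < u ∧ ∀ i, x i = u * ∏ k, (∏ j, A k i j) ^ (w k / n) := by
  set L : Fin m → Fin n → Fin n → ℝ := fun k i j => log (A k i j)
  have hL : ∀ k i j, L k j i = -L k i j := fun k i j => by
    rw [eq_neg_iff_add_eq_zero, add_comm, ← log_mul (hpos k i j).ne' (hpos k j i).ne', hrec,
      log_one]
  have hobj : ∀ y : Fin n → ℝ, (∀ j, 0 < y j) →
      ∑ k, w k * ∑ i, ∑ j, (log (A k i j) - log (y i / y j)) ^ 2 =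
        weightedFitError w L fun i => log (y i) := fun y hy => by
    simp only [weightedFitError, L, log_div (hy _).ne' (hy _).ne']
  have hgm : ∀ i, ∏ k, (∏ j, A k i j) ^ (w k / n) =
      exp (rowMean (fun i j => ∑ k, w k * L k i j) i) := fun i => by
    rw [prod_prod_rpow_eq_exp fun k j => hpos k i j, rowMean, Fintype.card_fin]
  simp only [hgm, hobj x hx]
  rw [forall_congr' fun y => forall_congr' fun hy => by rw [hobj y hy],
    forall_pos_log_iff (weightedFitError w L (fun i => log (x i)) ≤ weightedFitError w L ·),
    forall_le_weightedFitError_iff hsum hL, exists_log_eq_add_iff hx]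

/-- Weighted geometric mean method: a positive vector `x` minimizes the weighted
log-Euclidean approximation error for positive reciprocal matrices `A 1, …, A m`
with positive weights summing to one iff it is a positive multiple of the vector
of weighted geometric means. -/
theorem weighted_geometric_mean_minimizes_logEuclidean
    (n m : ℕ) (hn : 1 ≤ n) (hm : 1 ≤ m)
    (A : Fin m → Matrix (Fin n) (Fin n) ℝ)
    (hpos : ∀ k i j, 0 < A k i j)
    (hrec : ∀ k i j, A k i j * A k j i = 1)
    (w : Fin m → ℝ) (hw : ∀ k, 0 < w k) (hsum : ∑ k, w k = 1)
    (x : Fin n → ℝ) (hx : ∀ j, 0 < x j) :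
    (∀ y : Fin n → ℝ, (∀ j, 0 < y j) →
        (∑ k, w k * ∑ i, ∑ j, (Real.log (A k i j) - Real.log (x i / x j)) ^ 2) ≤
          ∑ k, w k * ∑ i, ∑ j, (Real.log (A k i j) - Real.log (y i / y j)) ^ 2) ↔
      ∃ u : ℝ, 0 < u ∧ ∀ i, x i = u * ∏ k, (∏ j, A k i j) ^ (w k / n) :=
  weighted_geometric_mean_minimizes_logEuclidean_general n m A hpos hrec w hsum x hx
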